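/- Let K be an algebraically closed field of characteristic 83. Let f(x,y,z) = x³y − x²y² + x²z² + xy³ − xyz² − xz³ − y⁴ + y³z − y²z² − yz³ and define g(x,y,z) = f(x − 69y − 1389z, y − 64z, z). Then the set of nonzero triples (x,y,z) ∈ K³ at which g and its three partial derivatives g_x, g_y, g_z all vanish is exactly the union of the nonzero scalar multiples of (0, 32, 1) and of (0, 40, 1); i.e., the plane quartic g = 0 over K has exactly the two singular points (0:32:1) and (0:40:1). -/
import Mathlib


open MvPolynomial

/-- The quartic `f(x,y,z) = x³y − x²y² + x²z² + xy³ − xyz² − xz³ − y⁴ + y³z − y²z² − yz³`. -/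
noncomputable def quarticF (K : Type) [CommRing K] : MvPolynomial (Fin 3) K :=
  X 0 ^ 3 * X 1 - X 0 ^ 2 * X 1 ^ 2 + X 0 ^ 2 * X 2 ^ 2 + X 0 * X 1 ^ 3
    - X 0 * X 1 * X 2 ^ 2 - X 0 * X 2 ^ 3 - X 1 ^ 4 + X 1 ^ 3 * X 2
    - X 1 ^ 2 * X 2 ^ 2 - X 1 * X 2 ^ 3

/-- The quartic `g(x,y,z) = f(x − 69y − 1389z, y − 64z, z)`. -/
noncomputable def quarticG (K : Type) [CommRing K] : MvPolynomial (Fin 3) K :=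
  aeval ![X 0 - 69 * X 1 - 1389 * X 2, X 1 - 64 * X 2, X 2] (quarticF K)

theorem pderiv_ofNat' {K : Type} [CommRing K] (i : Fin 3) (n : ℕ) [n.AtLeastTwo] :
    pderiv i (no_index (OfNat.ofNat n) : MvPolynomial (Fin 3) K) = 0 :=
  Derivation.map_natCast (pderiv (R := K) (σ := Fin 3) i) n

theorem quarticG_eq (K : Type) [CommRing K] :
    quarticG K = (X 0 ^ 3 * X 1 - 64 * X 0 ^ 3 * X 2 - 208 * X 0 ^ 2 * X 1 ^ 2 + 9209 * X 0 ^ 2 * X 1 * X 2 + 262593 * X 0 ^ 2 * X 2 ^ 2 + 14422 * X 0 * X 1 ^ 3 - 354144 * X 0 * X 1 ^ 2 * X 2 - 30793168 * X 0 * X 1 * X 2 ^ 2 - 359315803 * X 0 * X 2 ^ 3 - 333340 * X 1 ^ 4 + 1615331 * X 1 ^ 3 * X 2 + 872835917 * X 1 ^ 2 * X 2 ^ 2 + 22343910974 * X 1 * X 2 ^ 3 + 163955337238 * X 2 ^ 4) := by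
  simp only [quarticG, quarticF, map_add, map_sub, map_mul, map_pow, aeval_X,
    Matrix.cons_val_zero, Matrix.cons_val_one, Matrix.head_cons, Matrix.cons_val_two,
    Matrix.tail_cons]
  ring

theorem quarticG_eval (K : Type) [CommRing K] (v : Fin 3 → K) :
    eval v (quarticG K) = (v 0 ^ 3 * v 1 - 64 * v 0 ^ 3 * v 2 - 208 * v 0 ^ 2 * v 1 ^ 2 + 9209 * v 0 ^ 2 * v 1 * v 2 + 262593 * v 0 ^ 2 * v 2 ^ 2 + 14422 * v 0 * v 1 ^ 3 - 354144 * v 0 * v 1 ^ 2 * v 2 - 30793168 * v 0 * v 1 * v 2 ^ 2 - 359315803 * v 0 * v 2 ^ 3 - 333340 * v 1 ^ 4 + 1615331 * v 1 ^ 3 * v 2 + 872835917 * v 1 ^ 2 * v 2 ^ 2 + 22343910974 * v 1 * v 2 ^ 3 + 163955337238 * v 2 ^ 4) := by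
  rw [quarticG_eq]
  simp only [map_add, map_sub, map_neg, map_mul, map_pow, map_ofNat, eval_X]

theorem quarticG_pd0 (K : Type) [CommRing K] :
    pderiv 0 (quarticG K) = (3 * X 0 ^ 2 * X 1 - 192 * X 0 ^ 2 * X 2 - 416 * X 0 * X 1 ^ 2 + 18418 * X 0 * X 1 * X 2 + 525186 * X 0 * X 2 ^ 2 + 14422 * X 1 ^ 3 - 354144 * X 1 ^ 2 * X 2 - 30793168 * X 1 * X 2 ^ 2 - 359315803 * X 2 ^ 3) := by
  rw [quarticG_eq]
  simp only [map_add, map_sub, Derivation.leibniz, pderiv_pow, pderiv_X_self, Derivation.leibniz_pow,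
    pderiv_X_of_ne (by decide : (1:Fin 3) ≠ 0), pderiv_X_of_ne (by decide : (2:Fin 3) ≠ 0),
    pderiv_ofNat', map_ofNat, pderiv_C, smul_eq_mul]
  ring

theorem quarticG_pd1 (K : Type) [CommRing K] :
    pderiv 1 (quarticG K) = (X 0 ^ 3 - 416 * X 0 ^ 2 * X 1 + 9209 * X 0 ^ 2 * X 2 + 43266 * X 0 * X 1 ^ 2 - 708288 * X 0 * X 1 * X 2 - 30793168 * X 0 * X 2 ^ 2 - 1333360 * X 1 ^ 3 + 4845993 * X 1 ^ 2 * X 2 + 1745671834 * X 1 * X 2 ^ 2 + 22343910974 * X 2 ^ 3) := by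
  rw [quarticG_eq]
  simp only [map_add, map_sub, Derivation.leibniz, pderiv_pow, pderiv_X_self, Derivation.leibniz_pow,
    pderiv_X_of_ne (by decide : (0:Fin 3) ≠ 1), pderiv_X_of_ne (by decide : (2:Fin 3) ≠ 1),
    pderiv_ofNat', map_ofNat, pderiv_C, smul_eq_mul]
  ring

theorem quarticG_pd2 (K : Type) [CommRing K] :
    pderiv 2 (quarticG K) = (-64 * X 0 ^ 3 + 9209 * X 0 ^ 2 * X 1 + 525186 * X 0 ^ 2 * X 2 - 354144 * X 0 * X 1 ^ 2 - 61586336 * X 0 * X 1 * X 2 - 1077947409 * X 0 * X 2 ^ 2 + 1615331 * X 1 ^ 3 + 1745671834 * X 1 ^ 2 * X 2 + 67031732922 * X 1 * X 2 ^ 2 + 655821348952 * X 2 ^ 3) := by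
  rw [quarticG_eq]
  simp only [map_add, map_sub, Derivation.leibniz, pderiv_pow, pderiv_X_self, Derivation.leibniz_pow,
    pderiv_X_of_ne (by decide : (0:Fin 3) ≠ 2), pderiv_X_of_ne (by decide : (1:Fin 3) ≠ 2),
    pderiv_ofNat', map_ofNat, pderiv_C, smul_eq_mul]
  ring

/-- Let `K` be an algebraically closed field of characteristic `83`.  The common zeros of
`g` and its partial derivatives, other than the origin, are exactly the nonzero scalar
multiples of `(0, 32, 1)` and of `(0, 40, 1)`; i.e. the plane quartic `g = 0` has exactly
the two singular points `(0:32:1)` and `(0:40:1)`. -/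
theorem quarticG_singular_points_eightythree
    (K : Type) [Field K] [IsAlgClosed K] [CharP K 83]
    (v : Fin 3 → K) (hv : v ≠ 0) :
    (eval v (quarticG K) = 0 ∧ ∀ i : Fin 3, eval v (pderiv i (quarticG K)) = 0) ↔
      ∃ c : K, c ≠ 0 ∧ (v = c • ![0, 32, 1] ∨ v = c • ![0, 40, 1]) := by
  have h83 : (83 : K) = 0 := by exact_mod_cast CharP.cast_eq_zero K 83
  have e1 : eval v (pderiv 0 (quarticG K)) = (3 * v 0 ^ 2 * v 1 - 192 * v 0 ^ 2 * v 2 - 416 * v 0 * v 1 ^ 2 + 18418 * v 0 * v 1 * v 2 + 525186 * v 0 * v 2 ^ 2 + 14422 * v 1 ^ 3 - 354144 * v 1 ^ 2 * v 2 - 30793168 * v 1 * v 2 ^ 2 - 359315803 * v 2 ^ 3) := by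
    rw [quarticG_pd0]; simp only [map_add, map_sub, map_neg, map_mul, map_pow, map_ofNat, eval_X]
  have e2 : eval v (pderiv 1 (quarticG K)) = (v 0 ^ 3 - 416 * v 0 ^ 2 * v 1 + 9209 * v 0 ^ 2 * v 2 + 43266 * v 0 * v 1 ^ 2 - 708288 * v 0 * v 1 * v 2 - 30793168 * v 0 * v 2 ^ 2 - 1333360 * v 1 ^ 3 + 4845993 * v 1 ^ 2 * v 2 + 1745671834 * v 1 * v 2 ^ 2 + 22343910974 * v 2 ^ 3) := by
    rw [quarticG_pd1]; simp only [map_add, map_sub, map_neg, map_mul, map_pow, map_ofNat, eval_X]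
  have e3 : eval v (pderiv 2 (quarticG K)) = (-64 * v 0 ^ 3 + 9209 * v 0 ^ 2 * v 1 + 525186 * v 0 ^ 2 * v 2 - 354144 * v 0 * v 1 ^ 2 - 61586336 * v 0 * v 1 * v 2 - 1077947409 * v 0 * v 2 ^ 2 + 1615331 * v 1 ^ 3 + 1745671834 * v 1 ^ 2 * v 2 + 67031732922 * v 1 * v 2 ^ 2 + 655821348952 * v 2 ^ 3) := by
    rw [quarticG_pd2]; simp only [map_add, map_sub, map_neg, map_mul, map_pow, map_ofNat, eval_X]
  constructor
  · rintro ⟨hg0, hd⟩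
    have h1 := hd 0; rw [e1] at h1
    have h2 := hd 1; rw [e2] at h2
    have h3 := hd 2; rw [e3] at h3
    have ha : v 0 = 0 := by
      have h6 : (v 0) ^ 6 = 0 := by
        linear_combination (28 * v 0 ^ 3 + 13 * v 0 ^ 2 * v 1 + 19 * v 0 ^ 2 * v 2 + 82 * v 0 * v 1 ^ 2 + 60 * v 0 * v 1 * v 2 + 4 * v 0 * v 2 ^ 2 + 32 * v 1 ^ 3 + 36 * v 1 ^ 2 * v 2 + 51 * v 1 * v 2 ^ 2 + 62 * v 2 ^ 3) * h1 + (v 0 ^ 3 + 68 * v 0 ^ 2 * v 2 + 67 * v 0 * v 1 ^ 2 + 53 * v 0 * v 1 * v 2 + 76 * v 0 * v 2 ^ 2 + 5 * v 1 ^ 3 + 12 * v 1 ^ 2 * v 2 + 71 * v 1 * v 2 ^ 2 + 11 * v 2 ^ 3) * h2 + (34 * v 0 * v 1 ^ 2 + 78 * v 0 * v 1 * v 2 + 40 * v 0 * v 2 ^ 2 + 52 * v 1 ^ 3 + 35 * v 1 ^ 2 * v 2 + 60 * v 1 * v 2 ^ 2 + 50 * v 2 ^ 3) * h3 + (4 *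 v 0 ^ 5 * v 1 - 47 * v 0 ^ 5 * v 2 - 356 * v 0 ^ 4 * v 1 ^ 2 + 2750 * v 0 ^ 4 * v 1 * v 2 + 186360 * v 0 ^ 4 * v 2 ^ 2 + 7865 * v 0 ^ 3 * v 1 ^ 3 - 207896 * v 0 ^ 3 * v 1 ^ 2 * v 2 - 10653626 * v 0 ^ 3 * v 1 * v 2 ^ 2 - 123142349 * v 0 ^ 3 * v 2 ^ 3 + 102552 * v 0 ^ 2 * v 1 ^ 4 + 26898396 * v 0 ^ 2 * v 1 ^ 3 * v 2 + 525058321 * v 0 ^ 2 * v 1 ^ 2 * v 2 ^ 2 - 304632362 * v 0 ^ 2 * v 1 * v 2 ^ 3 - 17676255642 * v 0 ^ 2 * v 2 ^ 4 + 619804 * v 0 * v 1 ^ 5 - 680570419 * v 0 * v 1 ^ 4 * v 2 - 29777147455 * v 0 * v 1 ^ 3 * v 2 ^ 2 - 350759101013 * v 0 * v 1 ^ 2 * v 2 ^ 3 - 663381065232 * v 0 * v 1 * v 2 ^ 4 - 335847595122 * v 0 * v 2 ^ 5 - 937252 * v 1 ^ 6 - 1094323954 * v 1 ^ 5 * v 2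 - 42825783054 * v 1 ^ 4 * v 2 ^ 2 - 441855603167 * v 1 ^ 3 * v 2 ^ 3 - 330608794467 * v 1 ^ 2 * v 2 ^ 4 - 533569317713 * v 1 * v 2 ^ 5 - 397765938416 * v 2 ^ 6) * h83
      exact pow_eq_zero_iff (by norm_num) |>.mp h6
    have hq : (v 1 - 32 * v 2) * (v 1 - 40 * v 2) = 0 := by
      have h6 : ((v 1 - 32 * v 2) * (v 1 - 40 * v 2)) ^ 3 = 0 := by
        linear_combination (13 * v 0 ^ 2 * v 1 + 23 * v 0 ^ 2 * v 2 + 80 * v 0 * v 1 ^ 2 + 43 * v 0 * v 1 * v 2 + 28 * v 0 * v 2 ^ 2 + 3 * v 1 ^ 3 + 52 * v 1 ^ 2 * v 2 + 65 * v 1 * v 2 ^ 2 + v 2 ^ 3) * h1 + (44 * v 0 * v 1 ^ 2 + 50 * v 0 * v 1 * v 2 + 62 * v 0 * v 2 ^ 2 + 15 * v 1 ^ 3 + 70 * v 1 ^ 2 * v 2 + 37 * v 1 * v 2 ^ 2 + 9 * v 2 ^ 3) * h2 + (29 * v 0 * v 1 * v 2 + 2 * v 0 * v 2 ^ 2 +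 42 * v 1 ^ 3 + 80 * v 1 ^ 2 * v 2 + 73 * v 1 * v 2 ^ 2 + 31 * v 2 ^ 3) * h3 + (-v 0 ^ 4 * v 1 ^ 2 + 51 * v 0 ^ 4 * v 1 * v 2 + 54 * v 0 ^ 4 * v 2 ^ 2 + 315 * v 0 ^ 3 * v 1 ^ 3 - 10374 * v 0 ^ 3 * v 1 ^ 2 * v 2 - 276165 * v 0 ^ 3 * v 1 * v 2 ^ 2 - 164979 * v 0 ^ 3 * v 2 ^ 3 - 29379 * v 0 ^ 2 * v 1 ^ 4 + 231145 * v 0 ^ 2 * v 1 ^ 3 * v 2 + 42128892 * v 0 ^ 2 * v 1 ^ 2 * v 2 ^ 2 + 461259287 * v 0 ^ 2 * v 1 * v 2 ^ 3 + 148171880 * v 0 ^ 2 * v 2 ^ 4 + 864342 * v 0 * v 1 ^ 5 + 29600371 * v 0 * v 1 ^ 4 * v 2 - 896201288 * v 0 * v 1 ^ 3 * v 2 ^ 2 - 34881361828 * v 0 * v 1 ^ 2 * v 2 ^ 3 - 244340796338 * v 0 * v 1 * v 2 ^ 4 - 31966401841 * v 0 * v 2 ^ 5 - 576949 * v 1 ^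 6 - 884656457 * v 1 ^ 5 * v 2 - 35921319691 * v 1 ^ 4 * v 2 ^ 2 - 403486037741 * v 1 ^ 3 * v 2 ^ 3 - 711098028105 * v 1 ^ 2 * v 2 ^ 4 - 611715006273 * v 1 * v 2 ^ 5 - 247338560825 * v 2 ^ 6) * h83
      exact pow_eq_zero_iff (by norm_num) |>.mp h6
    have hc : v 2 ≠ 0 := by
      intro hc0
      rcases mul_eq_zero.mp hq with h | h <;>
      · apply hv
        funext i
        fin_cases i <;> simp_all
    refine ⟨v 2, hc, ?_⟩
    rcases mul_eq_zero.mp hq with h | h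
    · left
      funext i
      fin_cases i <;>
        simp [Pi.smul_apply, Matrix.cons_val_zero, Matrix.cons_val_one, Matrix.head_cons,
          smul_eq_mul, ha] <;> linear_combination h
    · right
      funext i
      fin_cases i <;>
        simp [Pi.smul_apply, Matrix.cons_val_zero, Matrix.cons_val_one, Matrix.head_cons,
          smul_eq_mul, ha] <;> linear_combination h
  · rintro ⟨t, ht, h | h⟩ <;> subst h
    · have hv0 : (t • ![(0:K), 32, 1]) 0 = 0 := by simp
      have hv1 : (t • ![(0:K), 32, 1]) 1 = 32 * t := by simp [mul_comm]
      have hv2 : (t • ![(0:K), 32, 1]) 2 = t := by simp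
      constructor
      · rw [quarticG_eval, hv0, hv1, hv2]
        linear_combination (17784859154 * t ^ 4) * h83
      · intro i
        fin_cases i
        · rw [show (⟨0, by norm_num⟩ : Fin 3) = 0 from rfl, e1, hv0, hv1, hv2]
          linear_combination (-14876633 * t ^ 3) * h83
        · rw [show (⟨1, by norm_num⟩ : Fin 3) = 1 from rfl, e2, hv0, hv1, hv2]
          linear_combination (475616458 * t ^ 3) * h83
        · rw [show (⟨2, by norm_num⟩ : Fin 3) = 2 from rfl, e3, hv0, hv1, hv2]
          linear_combination (55919709960 * t ^ 3) * h83
    · have hv0 : (t • ![(0:K), 40, 1]) 0 = 0 := by simp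
      have hv1 : (t • ![(0:K), 40, 1]) 1 = 40 * t := by simp [mul_comm]
      have hv2 : (t • ![(0:K), 40, 1]) 2 = t := by simp
      constructor
      · rw [quarticG_eval, hv0, hv1, hv2]
        linear_combination (20533494306 * t ^ 4) * h83
      · intro i
        fin_cases i
        · rw [show (⟨0, by norm_num⟩ : Fin 3) = 0 from rfl, e1, hv0, hv1, hv2]
          linear_combination (-14875481 * t ^ 3) * h83
        · rw [show (⟨1, by norm_num⟩ : Fin 3) = 1 from rfl, e2, hv0, hv1, hv2]
          linear_combination (175775098 * t ^ 3) * h83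
        · rw [show (⟨2, by norm_num⟩ : Fin 3) = 2 from rfl, e3, hv0, hv1, hv2]
          linear_combination (75102973304 * t ^ 3) * h83
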